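/- Let V = ℝ⁴ be symplectic with basis e₁, e₂, f₁, f₂ satisfying ω(eᵢ,fᵢ)=1, ω(e₁,e₂)=ω(f₁,f₂)=ω(e₁,f₂)=ω(e₂,f₁)=0. For a line l ⊂ V, let φ(l) denote the set of Lagrangian planes containing l, and for a Lagrangian L' with l ⊄ L' define c_l(L') := l + (l^⊥ ∩ L') ∈ φ(l). Let α, β ∈ ℝ with αβ ≠ 0 and set l₁ = span(e₁), l₂ = span(αe₁ + βf₁ + e₂), l₃ = span(f₁). Identify φ(l₁) with ℙ(span(e₂,f₂)) via L ↦ L ∩ span(e₂,f₂) (which is valid on the image of c_{l₁}). Then the composition c_{l₁} ∘ c_{l₃} ∘ c_{l₂} : φ(l₁) → φ(l₁) is, under this identification and in the basis (e₂, f₂), the projectivization of the unipotent matrix [[1, −1/(αβ)], [0, 1]]; in particular it is a nontrivial unipotent projective transformation. -/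

import Mathlib

/-!
A contraction along a line `⟨v⟩` sends a plane `⟨a, b⟩` to `⟨v, ω(b,v)•a − ω(a,v)•b⟩`, because
that vector spans `v^⊥ ∩ ⟨a, b⟩` as soon as `ω(·, v)` does not vanish on the plane. Starting
from `⟨e₁, x•e₂ + y•f₂⟩`, each contraction line pairs nontrivially with the previous one
(`ω(e₁, l₂) = β`, `ω(l₂, f₁) = α`, `ω(f₁, e₁) = −1`), and the second generator ends as
`(αβx − y)•e₂ + αβy•f₂`, which is `αβ` times the image of `(x, y)` under `[[1, −1/(αβ)], [0, 1]]`.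
-/

/-- The standard symplectic form on ℝ⁴, as a bilinear map; coordinates 0,1,2,3
correspond to the symplectic basis e₁,e₂,f₁,f₂ (ω(eᵢ,fᵢ)=1, other pairings 0). -/
noncomputable def omB : (Fin 4 → ℝ) →ₗ[ℝ] (Fin 4 → ℝ) →ₗ[ℝ] ℝ :=
  LinearMap.mk₂ ℝ (fun u v => u 0 * v 2 - u 2 * v 0 + u 1 * v 3 - u 3 * v 1)
    (fun m₁ m₂ n => by simp only [Pi.add_apply]; ring)
    (fun c m n => by simp only [Pi.smul_apply, smul_eq_mul]; ring)
    (fun m n₁ n₂ => by simp only [Pi.add_apply]; ring)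
    (fun c m n => by simp only [Pi.smul_apply, smul_eq_mul]; ring)

/-- Symplectic orthogonal of a subspace. -/
noncomputable def symplPerp (l : Submodule ℝ (Fin 4 → ℝ)) : Submodule ℝ (Fin 4 → ℝ) :=
  ⨅ w ∈ l, LinearMap.ker (omB.flip w)

/-- The contraction map c_l : for a line l and a Lagrangian L' with l ⊄ L',
c_l(L') = l + (l^⊥ ∩ L') is the Lagrangian through l determined by L'. -/
noncomputable def contractTo (l L : Submodule ℝ (Fin 4 → ℝ)) : Submodule ℝ (Fin 4 → ℝ) :=
  l ⊔ (symplPerp l ⊓ L)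

open Submodule

section LinearAlgebra

variable {K M : Type*}

theorem iInf_ker_span_singleton {R N P : Type*} [CommSemiring R] [AddCommMonoid M]
    [AddCommMonoid N] [AddCommMonoid P] [Module R M] [Module R N] [Module R P]
    (F : M →ₗ[R] N →ₗ[R] P) (v : M) :
    ⨅ w ∈ span R {v}, LinearMap.ker (F w) = LinearMap.ker (F v) := by
  refine le_antisymm (iInf₂_le v (mem_span_singleton_self v)) (le_iInf₂ fun w hw u hu => ?_)
  obtain ⟨c, rfl⟩ := mem_span_singleton.1 hw
  simp_all

variable [Field K] [AddCommGroup M] [Module K M]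

theorem ker_inf_span_pair (f : M →ₗ[K] K) (a b : M) (h : f a ≠ 0 ∨ f b ≠ 0) :
    LinearMap.ker f ⊓ span K {a, b} = span K {f b • a - f a • b} := by
  refine le_antisymm ?_ ?_
  · rintro u ⟨hker, hspan⟩
    obtain ⟨c, d, rfl⟩ := mem_span_pair.1 hspan
    have hcd : c * f a + d * f b = 0 := by simpa using hker
    rw [mem_span_singleton]
    rcases h with ha | hb
    · refine ⟨-d / f a, ?_⟩
      match_scalars <;> field_simp
      linear_combination -hcd
    · refine ⟨c / f b, ?_⟩
      match_scalars <;> field_simp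
      linear_combination -hcd
  · rw [span_singleton_le_iff_mem]
    refine ⟨?_, sub_mem (smul_mem _ _ (subset_span (by simp)))
      (smul_mem _ _ (subset_span (by simp)))⟩
    simp [mul_comm]

theorem span_pair_smul_right (a b : M) {c : K} (hc : c ≠ 0) :
    span K {a, c • b} = span K {a, b} := by
  rw [← Set.singleton_union, span_union, span_singleton_smul_eq (IsUnit.mk0 c hc),
    ← span_union, Set.singleton_union]

end LinearAlgebra

@[simp]
theorem omB_apply (u v : Fin 4 → ℝ) :
    omB u v = u 0 * v 2 - u 2 * v 0 + u 1 * v 3 - u 3 * v 1 :=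
  rfl

theorem contractTo_span_pair {v a b w : Fin 4 → ℝ} (h : omB a v ≠ 0 ∨ omB b v ≠ 0)
    (hw : w = omB b v • a - omB a v • b) :
    contractTo (span ℝ {v}) (span ℝ {a, b}) = span ℝ {v, w} := by
  have hperp := ker_inf_span_pair (omB.flip v) a b h
  simp only [LinearMap.flip_apply] at hperp
  rw [contractTo, symplPerp, iInf_ker_span_singleton, hperp, ← span_union,
    Set.singleton_union, hw]

theorem three_contractions_give_unipotent_general (α β : ℝ) (hα : α ≠ 0) (hβ : β ≠ 0)
    (x y : ℝ) :
    contractTo (Submodule.span ℝ {![(1 : ℝ), 0, 0, 0]})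
      (contractTo (Submodule.span ℝ {![(0 : ℝ), 0, 1, 0]})
        (contractTo (Submodule.span ℝ {![α, 1, β, 0]})
          (Submodule.span ℝ
            {![(1 : ℝ), 0, 0, 0],
              x • ![(0 : ℝ), 1, 0, 0] + y • ![(0 : ℝ), 0, 0, 1]})))
    = Submodule.span ℝ
        {![(1 : ℝ), 0, 0, 0],
          (x - y / (α * β)) • ![(0 : ℝ), 1, 0, 0] + y • ![(0 : ℝ), 0, 0, 1]} := by
  have hscale : ![(0 : ℝ), α * β * x - y, 0, α * β * y]
      = (α * β) • ((x - y / (α * β)) • ![(0 : ℝ), 1, 0, 0] + y • ![(0 : ℝ), 0, 0, 1]) := by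
    ext i; fin_cases i <;> simp
    field_simp
  rw [contractTo_span_pair (w := ![-y, -(β * x), 0, -(β * y)]) (Or.inl (by simpa using hβ)),
    contractTo_span_pair (w := ![0, α * β * x - y, -(β * y), α * β * y])
      (Or.inl (by simpa using hα)),
    contractTo_span_pair (w := ![0, α * β * x - y, 0, α * β * y]) (Or.inl (by simp)),
    hscale, span_pair_smul_right _ _ (mul_ne_zero hα hβ)]
  all_goals ext i; fin_cases i <;> simp <;> ring

/-- With l₁ = span(e₁), l₂ = span(αe₁+βf₁+e₂), l₃ = span(f₁) (αβ ≠ 0), the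
composition c_{l₁} ∘ c_{l₃} ∘ c_{l₂} on Lagrangians through l₁, identified with
ℙ(span(e₂,f₂)) via the coordinates (x,y), is the projectivization of the
nontrivial unipotent matrix [[1, −1/(αβ)],[0,1]] in the basis (e₂,f₂). -/
theorem three_contractions_give_unipotent (α β : ℝ) (hα : α ≠ 0) (hβ : β ≠ 0)
    (x y : ℝ) (hxy : ¬(x = 0 ∧ y = 0)) :
    contractTo (Submodule.span ℝ {![(1 : ℝ), 0, 0, 0]})
      (contractTo (Submodule.span ℝ {![(0 : ℝ), 0, 1, 0]})
        (contractTo (Submodule.span ℝ {![α, 1, β, 0]})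
          (Submodule.span ℝ
            {![(1 : ℝ), 0, 0, 0],
              x • ![(0 : ℝ), 1, 0, 0] + y • ![(0 : ℝ), 0, 0, 1]})))
    = Submodule.span ℝ
        {![(1 : ℝ), 0, 0, 0],
          (x - y / (α * β)) • ![(0 : ℝ), 1, 0, 0] + y • ![(0 : ℝ), 0, 0, 1]} :=
  three_contractions_give_unipotent_general α β hα hβ x y
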